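/- arXiv:2105.06471 — 2 statements merged into one kernel-verified Lean document; each statement's English description precedes it below -/
import Mathlib

section
/- Let A and B be bounded linear operators (or n×n complex matrices). Then lim_{n→∞} (exp(A/n) · exp(B/n))^n = exp(A + B). (Lie–Trotter product formula.) -/
/-!
Put `X_k = exp (x/k) * exp (y/k)` and `Y_k = exp ((x + y)/k)`, so that `Y_k ^ k = exp (x + y)`.
Both have norm at most `exp ((‖x‖ + ‖y‖)/k)`, and expanding the exponentials to second order shows
`‖X_k - Y_k‖ = O(1/k²)`, since the first-order terms agree. The telescoping estimate
`‖X^k - Y^k‖ ≤ k M^(k-1) ‖X - Y‖` then gives `‖X_k ^ k - exp (x + y)‖ = O(1/k)`.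
-/

open NormedSpace Filter Topology
open scoped Nat

theorem norm_pow_sub_pow_le {R : Type*} [SeminormedRing R] {x y : R} {M : ℝ}
    (hx : ‖x‖ ≤ M) (hy : ‖y‖ ≤ M) (k : ℕ) :
    ‖x ^ k - y ^ k‖ ≤ k * M ^ (k - 1) * ‖x - y‖ := by
  cases k with
  | zero => simp
  | succ k =>
    simp only [Nat.add_sub_cancel, Nat.cast_succ]
    induction k with
    | zero => simp
    | succ k ih =>
      have hxk : ‖x ^ (k + 1)‖ ≤ M ^ (k + 1) :=
        (norm_pow_le' x k.succ_pos).trans (pow_le_pow_left₀ (norm_nonneg x) hx _)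
      calc ‖x ^ (k + 1 + 1) - y ^ (k + 1 + 1)‖
          = ‖x ^ (k + 1) * (x - y) + (x ^ (k + 1) - y ^ (k + 1)) * y‖ := by
            congr 1; noncomm_ring
        _ ≤ M ^ (k + 1) * ‖x - y‖ + (k + 1) * M ^ k * ‖x - y‖ * M := by
          refine (norm_add_le _ _).trans (add_le_add ?_ ?_)
          · exact (norm_mul_le _ _).trans (by gcongr)
          · exact (norm_mul_le _ _).trans
              (mul_le_mul ih hy (norm_nonneg _) ((norm_nonneg _).trans ih))
        _ = (↑(k + 1) + 1) * M ^ (k + 1) * ‖x - y‖ := by push_cast; ring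

-- `NormOneClass` would exclude the zero ring, e.g. `Matrix (Fin 0) (Fin 0) ℂ`, where `‖1‖ = 0`.
theorem norm_pow_le_of_norm_one_le {R : Type*} [SeminormedRing R] (h1 : ‖(1 : R)‖ ≤ 1)
    (x : R) (n : ℕ) : ‖x ^ n‖ ≤ ‖x‖ ^ n := by
  rcases n.eq_zero_or_pos with rfl | hn
  · simpa using h1
  · exact norm_pow_le' x hn

section BanachAlgebra

variable {𝔸 : Type*} [NormedRing 𝔸] [NormedAlgebra ℝ 𝔸] [CompleteSpace 𝔸]

-- Mathlib's `exp_nsmul` asks for a `NormedAlgebra ℚ 𝔸` instance, which `ℝ`-algebras do not get.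
theorem exp_natCast_smul (n : ℕ) (x : 𝔸) : exp ((n : ℝ) • x) = exp x ^ n := by
  have hball (z : 𝔸) : z ∈ Metric.eball (0 : 𝔸) (expSeries ℝ 𝔸).radius := by
    simp [expSeries_radius_eq_top]
  induction n with
  | zero => simp
  | succ n ih =>
    rw [Nat.cast_succ, add_smul, one_smul, pow_succ, ← ih,
      exp_add_of_commute_of_mem_ball ((Commute.refl x).smul_left _) (hball _) (hball _)]

theorem norm_exp_sub_sum_range_le (h1 : ‖(1 : 𝔸)‖ ≤ 1) (x : 𝔸) (m : ℕ) :
    ‖exp x - ∑ i ∈ Finset.range m, (i ! : ℝ)⁻¹ • x ^ i‖ ≤ ‖x‖ ^ m * Real.exp ‖x‖ := by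
  have htail := (hasSum_nat_add_iff' m).mpr (exp_series_hasSum_exp' (𝕂 := ℝ) x)
  have hreal : HasSum (fun n => ‖x‖ ^ m * (‖x‖ ^ n / n !)) (‖x‖ ^ m * Real.exp ‖x‖) := by
    rw [Real.exp_eq_exp_ℝ]
    exact (expSeries_div_hasSum_exp ‖x‖).mul_left _
  refine htail.norm_le_of_bounded hreal fun n => ?_
  rw [norm_smul, norm_inv, RCLike.norm_natCast]
  calc ((n + m)! : ℝ)⁻¹ * ‖x ^ (n + m)‖ ≤ (n ! : ℝ)⁻¹ * ‖x‖ ^ (n + m) := by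
        gcongr
        · exact Nat.le_add_right n m
        · exact norm_pow_le_of_norm_one_le h1 x _
    _ = ‖x‖ ^ m * (‖x‖ ^ n / n !) := by ring

theorem norm_exp_le (h1 : ‖(1 : 𝔸)‖ ≤ 1) (x : 𝔸) : ‖exp x‖ ≤ Real.exp ‖x‖ := by
  simpa using norm_exp_sub_sum_range_le h1 x 0

theorem norm_exp_sub_one_le (h1 : ‖(1 : 𝔸)‖ ≤ 1) (x : 𝔸) :
    ‖exp x - 1‖ ≤ ‖x‖ * Real.exp ‖x‖ := by
  simpa using norm_exp_sub_sum_range_le h1 x 1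

theorem norm_exp_sub_one_sub_self_le (h1 : ‖(1 : 𝔸)‖ ≤ 1) (x : 𝔸) :
    ‖exp x - 1 - x‖ ≤ ‖x‖ ^ 2 * Real.exp ‖x‖ := by
  simpa [Finset.sum_range_succ, sub_sub] using norm_exp_sub_sum_range_le h1 x 2

theorem norm_exp_mul_exp_sub_exp_add_le (h1 : ‖(1 : 𝔸)‖ ≤ 1) (x y : 𝔸) :
    ‖exp x * exp y - exp (x + y)‖ ≤ 2 * (‖x‖ + ‖y‖) ^ 2 * Real.exp (‖x‖ + ‖y‖) := by
  set s := ‖x‖ + ‖y‖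
  have hxs : ‖x‖ ≤ s := le_add_of_nonneg_right (norm_nonneg y)
  have hys : ‖y‖ ≤ s := le_add_of_nonneg_left (norm_nonneg x)
  have hxys : ‖x + y‖ ≤ s := norm_add_le x y
  have hdecomp : exp x * exp y - exp (x + y) = (exp x - 1) * (exp y - 1) + (exp x - 1 - x) +
      (exp y - 1 - y) - (exp (x + y) - 1 - (x + y)) := by
    noncomm_ring
  have hprod : ‖(exp x - 1) * (exp y - 1)‖ ≤ ‖x‖ * ‖y‖ * Real.exp s :=
    calc _ ≤ (‖x‖ * Real.exp ‖x‖) * (‖y‖ * Real.exp ‖y‖) :=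
          (norm_mul_le _ _).trans (mul_le_mul (norm_exp_sub_one_le h1 x)
            (norm_exp_sub_one_le h1 y) (norm_nonneg _) (by positivity))
      _ = ‖x‖ * ‖y‖ * Real.exp s := by rw [Real.exp_add]; ring
  have hrem (z : 𝔸) (hz : ‖z‖ ≤ s) : ‖exp z - 1 - z‖ ≤ ‖z‖ ^ 2 * Real.exp s :=
    (norm_exp_sub_one_sub_self_le h1 z).trans (by gcongr)
  rw [hdecomp]
  calc _ ≤ ‖(exp x - 1) * (exp y - 1)‖ + ‖exp x - 1 - x‖ + ‖exp y - 1 - y‖ +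
        ‖exp (x + y) - 1 - (x + y)‖ := (norm_sub_le _ _).trans (by gcongr; exact norm_add₃_le)
    _ ≤ (‖x‖ * ‖y‖ + ‖x‖ ^ 2 + ‖y‖ ^ 2 + ‖x + y‖ ^ 2) * Real.exp s := by
        linarith [hrem x hxs, hrem y hys, hrem _ hxys]
    _ ≤ 2 * s ^ 2 * Real.exp s := by
        gcongr
        nlinarith [norm_nonneg x, norm_nonneg y, norm_nonneg (x + y)]

noncomputable def trotterProduct (x y : 𝔸) (k : ℕ) : 𝔸 :=
  (exp ((k : ℝ)⁻¹ • x) * exp ((k : ℝ)⁻¹ • y)) ^ k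

theorem norm_trotterProduct_sub_exp_add_le (h1 : ‖(1 : 𝔸)‖ ≤ 1) (x y : 𝔸) {k : ℕ}
    (hk : k ≠ 0) :
    ‖trotterProduct x y k - exp (x + y)‖ ≤ 2 * (‖x‖ + ‖y‖) ^ 2 * Real.exp (‖x‖ + ‖y‖) / k := by
  set s := ‖x‖ + ‖y‖
  set x' := (k : ℝ)⁻¹ • x
  set y' := (k : ℝ)⁻¹ • y
  have hk' : (0 : ℝ) < k := by positivity
  have hs : ‖x'‖ + ‖y'‖ = s / k := by
    simp only [x', y', s, norm_smul, norm_inv, RCLike.norm_natCast]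
    ring
  have hexp_add : exp (x + y) = exp (x' + y') ^ k := by
    rw [← exp_natCast_smul, smul_add, smul_smul, smul_smul, mul_inv_cancel₀ hk'.ne', one_smul,
      one_smul]
  have hprod : ‖exp x' * exp y'‖ ≤ Real.exp (s / k) := by
    rw [← hs, Real.exp_add]
    exact (norm_mul_le _ _).trans
      (mul_le_mul (norm_exp_le h1 x') (norm_exp_le h1 y') (norm_nonneg _) (by positivity))
  have hsum : ‖exp (x' + y')‖ ≤ Real.exp (s / k) :=
    (norm_exp_le h1 _).trans (Real.exp_le_exp.2 (hs ▸ norm_add_le _ _))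
  rw [trotterProduct, hexp_add]
  calc _ ≤ k * Real.exp (s / k) ^ (k - 1) * (2 * (s / k) ^ 2 * Real.exp (s / k)) := by
        refine (norm_pow_sub_pow_le hprod hsum k).trans ?_
        gcongr
        simpa [hs] using norm_exp_mul_exp_sub_exp_add_le h1 x' y'
    _ = 2 * s ^ 2 * Real.exp (s / k) ^ k / k := by
        rw [← pow_sub_one_mul hk (Real.exp (s / k))]
        field_simp
    _ = 2 * s ^ 2 * Real.exp s / k := by
        rw [← Real.exp_nat_mul, mul_div_cancel₀ _ hk'.ne']

theorem tendsto_trotterProduct (h1 : ‖(1 : 𝔸)‖ ≤ 1) (x y : 𝔸) :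
    Tendsto (trotterProduct x y) atTop (𝓝 (exp (x + y))) := by
  rw [← tendsto_sub_nhds_zero_iff]
  refine squeeze_zero_norm' ?_ (tendsto_const_div_atTop_nhds_zero_nat
    (2 * (‖x‖ + ‖y‖) ^ 2 * Real.exp (‖x‖ + ‖y‖)))
  filter_upwards [eventually_ne_atTop 0] with k hk
  exact norm_trotterProduct_sub_exp_add_le h1 x y hk

end BanachAlgebra

open scoped Matrix.Norms.L2Operator

/-- Lie–Trotter product formula for complex matrices. -/
theorem lie_trotter (n : ℕ) (A B : Matrix (Fin n) (Fin n) ℂ) :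
    Filter.Tendsto
      (fun k : ℕ =>
        (NormedSpace.exp ((k : ℂ)⁻¹ • A) * NormedSpace.exp ((k : ℂ)⁻¹ • B)) ^ k)
      Filter.atTop (nhds (NormedSpace.exp (A + B))) := by
  have h1 : ‖(1 : Matrix (Fin n) (Fin n) ℂ)‖ ≤ 1 := by
    rw [Matrix.cstar_norm_def, map_one]
    exact ContinuousLinearMap.norm_id_le
  have hsmul (k : ℕ) (M : Matrix (Fin n) (Fin n) ℂ) : (k : ℂ)⁻¹ • M = (k : ℝ)⁻¹ • M := by
    rw [← Complex.coe_smul, Complex.ofReal_inv, Complex.ofReal_natCast]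
  exact (tendsto_trotterProduct h1 A B).congr fun k => by rw [trotterProduct, hsmul, hsmul]
end

section
/- Let Ω be a probability space with measure ν, and for each τ ∈ Ω let D_τ be an n×n Hermitian matrix, with τ ↦ D_τ measurable and uniformly bounded in operator norm. Let C be an n×n Hermitian matrix whose eigenvalue vector satisfies λ⃗(C) ≺_w ∫_Ω λ⃗(D_τ) dν(τ) (weak majorization of the integrated decreasingly-ordered eigenvalue vectors). Then for any non-decreasing convex function f : ℝ → [0,∞) and any k ∈ {1,…,n}: Σ_{j=1}^k λ_j(f(C)) ≤ ∫_Ω Σ_{j=1}^k λ_j(f(D_τ)) dν(τ), where f(·) is applied via functional calculus and λ_j denotes the j-th largest eigenvalue of |·|. -/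
/-!
Sort the eigenvalues decreasingly and write `u` for those of `C` and `w j := ∫ λⱼ(D_τ) dν` for the
averaged ones of `D_τ`; the hypothesis says that the partial sums of `u` are dominated by those of
`w`. For `f` convex and non-decreasing, a monotone nonnegative subgradient `φ` gives
`f (wⱼ) - f (uⱼ) ≥ φ (uⱼ) (wⱼ - uⱼ)`, and Abel summation against the decreasing weights `φ (uⱼ)`
turns the domination of partial sums into `∑_{j<k} f (uⱼ) ≤ ∑_{j<k} f (wⱼ)` (Tomić–Weyl).
Jensen's inequality `f (wⱼ) ≤ ∫ f (λⱼ(D_τ)) dν` finishes the proof, since `f` preserves the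
decreasing order of eigenvalues.
-/

open MeasureTheory

/-- Sum of the `k` largest entries of a vector `v : Fin n → ℝ`. -/
noncomputable def kMaxSum {n : ℕ} (v : Fin n → ℝ) (k : ℕ) : ℝ :=
  sSup {x : ℝ | ∃ s : Finset (Fin n), s.card = k ∧ x = ∑ i ∈ s, v i}

open Finset

theorem Finset.sum_range_mul_nonpos_of_antitoneOn {c d : ℕ → ℝ} {k : ℕ}
    (hc : AntitoneOn c (Set.Iio k)) (hc_nonneg : ∀ i, 0 ≤ c i)
    (hd : ∀ m ≤ k, ∑ i ∈ range m, d i ≤ 0) :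
    ∑ i ∈ range k, c i * d i ≤ 0 := by
  have hterm : ∀ i ∈ range (k - 1), 0 ≤ (c (i + 1) - c i) * ∑ j ∈ range (i + 1), d j := by
    intro i hi
    have hik : i + 1 < k := by grind
    refine mul_nonneg_of_nonpos_of_nonpos ?_ (hd _ hik.le)
    exact sub_nonpos.2 (hc (by grind) hik (Nat.le_succ i))
  have := mul_nonpos_of_nonneg_of_nonpos (hc_nonneg (k - 1)) (hd k le_rfl)
  have := Finset.sum_nonneg hterm
  have hparts := sum_range_by_parts c d k
  simp only [smul_eq_mul] at hparts
  rw [hparts]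
  linarith

theorem ConvexOn.add_rightDeriv_mul_sub_le {f : ℝ → ℝ} (hf : ConvexOn ℝ Set.univ f) (x y : ℝ) :
    f x + derivWithin f (Set.Ioi x) x * (y - x) ≤ f y := by
  rcases lt_trichotomy x y with hxy | rfl | hyx
  · have := hf.rightDeriv_le_slope_of_mem_interior (by simp) (Set.mem_univ y) hxy
    rw [slope_def_field, le_div_iff₀ (sub_pos.2 hxy)] at this
    linarith
  · simp
  · have := (hf.slope_le_leftDeriv_of_mem_interior (Set.mem_univ y) (by simp) hyx).trans
      (hf.leftDeriv_le_rightDeriv_of_mem_interior (by simp))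
    rw [slope_def_field, div_le_iff₀ (sub_pos.2 hyx)] at this
    linarith

theorem ConvexOn.sum_range_le_of_forall_sum_range_le {f : ℝ → ℝ} (hf : ConvexOn ℝ Set.univ f)
    (hf_mono : Monotone f) {u w : ℕ → ℝ} {k : ℕ} (hu : AntitoneOn u (Set.Iio k))
    (huw : ∀ m ≤ k, ∑ i ∈ range m, u i ≤ ∑ i ∈ range m, w i) :
    ∑ i ∈ range k, f (u i) ≤ ∑ i ∈ range k, f (w i) := by
  set φ : ℝ → ℝ := fun x => derivWithin f (Set.Ioi x) x
  have hsub := hf.add_rightDeriv_mul_sub_le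
  have hφ_mono : Monotone φ := by
    simpa [monotoneOn_univ] using hf.monotoneOn_rightDeriv
  have hφ_nonneg : ∀ x, 0 ≤ φ x := fun x => by
    linarith [hsub x (x - 1), hf_mono (sub_le_self x zero_le_one)]
  have hAbel : ∑ i ∈ range k, φ (u i) * (u i - w i) ≤ 0 := by
    refine sum_range_mul_nonpos_of_antitoneOn (fun i hi j hj hij => hφ_mono (hu hi hj hij))
      (fun i => hφ_nonneg _) fun m hm => ?_
    rw [sum_sub_distrib]
    linarith [huw m hm]
  calc ∑ i ∈ range k, f (u i)
      ≤ ∑ i ∈ range k, (f (w i) + φ (u i) * (u i - w i)) :=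
        sum_le_sum fun i _ => by linarith [hsub (u i) (w i)]
    _ ≤ ∑ i ∈ range k, f (w i) := by
        rw [sum_add_distrib]
        linarith

theorem Fin.le_val_of_strictMono {k n : ℕ} {g : Fin k → Fin n} (hg : StrictMono g) (i : Fin k) :
    (i : ℕ) ≤ g i := by
  have := card_le_card_of_injOn g (s := Iic i) (t := Iic (g i))
    (fun j hj => mem_Iic.2 (hg.monotone (mem_Iic.1 hj))) hg.injective.injOn
  simpa using this

theorem Tuple.exists_perm_antitone_comp {n : ℕ} (v : Fin n → ℝ) :
    ∃ σ : Equiv.Perm (Fin n), Antitone (v ∘ σ) :=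
  ⟨_, monotone_toDual_comp_iff.1 (Tuple.monotone_sort (OrderDual.toDual ∘ v))⟩

namespace kMaxSum

variable {n : ℕ}

theorem zero (v : Fin n → ℝ) : kMaxSum v 0 = 0 := by
  simp [kMaxSum]

theorem comp_perm (v : Fin n → ℝ) (σ : Equiv.Perm (Fin n)) (k : ℕ) :
    kMaxSum (v ∘ σ) k = kMaxSum v k := by
  suffices h : ∀ (v : Fin n → ℝ) (σ : Equiv.Perm (Fin n)),
      {x : ℝ | ∃ s : Finset (Fin n), s.card = k ∧ x = ∑ i ∈ s, (v ∘ σ) i} ⊆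
      {x : ℝ | ∃ s : Finset (Fin n), s.card = k ∧ x = ∑ i ∈ s, v i} by
    refine congrArg sSup (subset_antisymm (h v σ) ?_)
    simpa [Function.comp_assoc] using h (v ∘ σ) σ.symm
  rintro v σ x ⟨s, rfl, rfl⟩
  exact ⟨s.map σ.toEmbedding, card_map _, by simp⟩

theorem _root_.Antitone.kMaxSum_eq {v : Fin n → ℝ} (hv : Antitone v) {k : ℕ} (hk : k ≤ n) :
    kMaxSum v k = ∑ i : Fin k, v (Fin.castLE hk i) := by
  refine IsGreatest.csSup_eq ⟨⟨univ.map (Fin.castLEEmb hk), by simp, by simp⟩, ?_⟩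
  rintro x ⟨s, rfl, rfl⟩
  calc ∑ i ∈ s, v i = ∑ i : Fin s.card, v (s.orderEmbOfFin rfl i) := by
        rw [← sum_coe_sort, ← (s.orderIsoOfFin rfl).toEquiv.sum_comp]
        rfl
    _ ≤ _ := sum_le_sum fun i _ => hv (Fin.le_val_of_strictMono (s.orderEmbOfFin rfl).strictMono i)

end kMaxSum

/-- The `j`-th largest entry of `v`, counting from `0`; junk for `j ≥ n`. Taking differences of
`kMaxSum` makes integrability in a parameter follow from that of `kMaxSum`. -/
noncomputable def kthLargest {n : ℕ} (v : Fin n → ℝ) (j : ℕ) : ℝ :=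
  kMaxSum v (j + 1) - kMaxSum v j

namespace kthLargest

variable {n : ℕ}

theorem sum_range (v : Fin n → ℝ) (m : ℕ) : ∑ j ∈ range m, kthLargest v j = kMaxSum v m :=
  (sum_range_sub (kMaxSum v) m).trans (sub_eq_self.2 (kMaxSum.zero v))

theorem comp_perm (v : Fin n → ℝ) (σ : Equiv.Perm (Fin n)) (j : ℕ) :
    kthLargest (v ∘ σ) j = kthLargest v j := by
  simp only [kthLargest, kMaxSum.comp_perm]

theorem _root_.Antitone.kthLargest_eq {v : Fin n → ℝ} (hv : Antitone v) {j : ℕ} (hj : j < n) :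
    kthLargest v j = v ⟨j, hj⟩ := by
  rw [kthLargest, hv.kMaxSum_eq hj, hv.kMaxSum_eq hj.le, Fin.sum_univ_castSucc]
  exact add_sub_cancel_left _ _

theorem antitoneOn (v : Fin n → ℝ) : AntitoneOn (kthLargest v) (Set.Iio n) := by
  obtain ⟨σ, hσ⟩ := Tuple.exists_perm_antitone_comp v
  intro i hi j hj hij
  rw [← comp_perm v σ, ← comp_perm v σ, hσ.kthLargest_eq hi, hσ.kthLargest_eq hj]
  exact hσ (Fin.mk_le_mk.2 hij)

theorem comp_of_monotone {f : ℝ → ℝ} (hf : Monotone f) (v : Fin n → ℝ) {j : ℕ} (hj : j < n) :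
    kthLargest (fun i => f (v i)) j = f (kthLargest v j) := by
  obtain ⟨σ, hσ⟩ := Tuple.exists_perm_antitone_comp v
  rw [← comp_perm v σ, ← comp_perm (fun i => f (v i)) σ, hσ.kthLargest_eq hj]
  exact (hf.comp_antitone hσ).kthLargest_eq hj

variable {Ω : Type*} [MeasurableSpace Ω] {ν : Measure Ω} {V : Ω → Fin n → ℝ}

theorem integrable (hV : ∀ k, Integrable (fun τ => kMaxSum (V τ) k) ν) (j : ℕ) :
    Integrable (fun τ => kthLargest (V τ) j) ν :=
  (hV (j + 1)).sub (hV j)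

theorem integral_kMaxSum_eq_sum (hV : ∀ k, Integrable (fun τ => kMaxSum (V τ) k) ν) (m : ℕ) :
    ∫ τ, kMaxSum (V τ) m ∂ν = ∑ j ∈ range m, ∫ τ, kthLargest (V τ) j ∂ν := by
  simp_rw [← sum_range]
  exact integral_finsetSum _ fun j _ => integrable hV j

end kthLargest

theorem kyFan_convex_integral_average_general {Ω : Type*} [MeasurableSpace Ω]
    (ν : Measure Ω) [IsProbabilityMeasure ν]
    (n : ℕ) (C : Matrix (Fin n) (Fin n) ℂ) (hC : C.IsHermitian)
    (D : Ω → Matrix (Fin n) (Fin n) ℂ) (hD : ∀ τ, (D τ).IsHermitian)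
    (hint : ∀ k : ℕ, Integrable (fun τ => kMaxSum ((hD τ).eigenvalues) k) ν)
    (f : ℝ → ℝ)
    (hf_mono : Monotone f) (hf_conv : ConvexOn ℝ Set.univ f)
    (hintf : ∀ k : ℕ,
      Integrable (fun τ => kMaxSum (fun j => f ((hD τ).eigenvalues j)) k) ν)
    (hmaj : ∀ k : ℕ, k ≤ n →
      kMaxSum hC.eigenvalues k ≤ ∫ τ, kMaxSum ((hD τ).eigenvalues) k ∂ν) :
    ∀ k : ℕ, 1 ≤ k → k ≤ n →
      kMaxSum (fun j => f (hC.eigenvalues j)) k ≤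
        ∫ τ, kMaxSum (fun j => f ((hD τ).eigenvalues j)) k ∂ν := by
  intro k _ hkn
  set u := kthLargest hC.eigenvalues
  set w : ℕ → ℝ := fun j => ∫ τ, kthLargest (hD τ).eigenvalues j ∂ν
  have hweak : ∀ m ≤ k, ∑ j ∈ range m, u j ≤ ∑ j ∈ range m, w j := fun m hm => by
    simpa only [u, w, kthLargest.sum_range, ← kthLargest.integral_kMaxSum_eq_sum hint]
      using hmaj m (hm.trans hkn)
  have hjensen : ∀ j < n,
      f (w j) ≤ ∫ τ, kthLargest (fun i => f ((hD τ).eigenvalues i)) j ∂ν := fun j hj => by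
    have hcomp := fun τ => kthLargest.comp_of_monotone hf_mono (hD τ).eigenvalues hj
    rw [integral_congr_ae (ae_of_all _ hcomp)]
    exact hf_conv.map_integral_le (hf_conv.continuousOn isOpen_univ) isClosed_univ
      (ae_of_all _ fun _ => Set.mem_univ _) (kthLargest.integrable hint j)
      ((kthLargest.integrable hintf j).congr (ae_of_all _ hcomp))
  calc kMaxSum (fun j => f (hC.eigenvalues j)) k
      = ∑ j ∈ range k, f (u j) := by
        rw [← kthLargest.sum_range]
        exact sum_congr rfl fun j hj =>
          kthLargest.comp_of_monotone hf_mono _ ((mem_range.1 hj).trans_le hkn)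
    _ ≤ ∑ j ∈ range k, f (w j) := hf_conv.sum_range_le_of_forall_sum_range_le hf_mono
        ((kthLargest.antitoneOn _).mono (Set.Iio_subset_Iio hkn)) hweak
    _ ≤ ∑ j ∈ range k, ∫ τ, kthLargest (fun i => f ((hD τ).eigenvalues i)) j ∂ν :=
        sum_le_sum fun j hj => hjensen j ((mem_range.1 hj).trans_le hkn)
    _ = ∫ τ, kMaxSum (fun j => f ((hD τ).eigenvalues j)) k ∂ν :=
        (kthLargest.integral_kMaxSum_eq_sum hintf k).symm

/-- If `λ⃗(C) ≺_w ∫ λ⃗(D_τ) dν(τ)` then for every non-decreasing convex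
`f : ℝ → [0,∞)` and every `k`, the Ky Fan k-norm of `f(C)` is at most the
integral of the Ky Fan k-norms of `f(D_τ)`. -/
theorem kyFan_convex_integral_average {Ω : Type*} [MeasurableSpace Ω]
    (ν : Measure Ω) [IsProbabilityMeasure ν]
    (n : ℕ) (C : Matrix (Fin n) (Fin n) ℂ) (hC : C.IsHermitian)
    (D : Ω → Matrix (Fin n) (Fin n) ℂ) (hD : ∀ τ, (D τ).IsHermitian)
    (hbdd : ∃ M : ℝ, ∀ τ j, |(hD τ).eigenvalues j| ≤ M)
    (hint : ∀ k : ℕ, Integrable (fun τ => kMaxSum ((hD τ).eigenvalues) k) ν)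
    (f : ℝ → ℝ) (hf_nonneg : ∀ x, 0 ≤ f x)
    (hf_mono : Monotone f) (hf_conv : ConvexOn ℝ Set.univ f)
    (hintf : ∀ k : ℕ,
      Integrable (fun τ => kMaxSum (fun j => f ((hD τ).eigenvalues j)) k) ν)
    (hmaj : ∀ k : ℕ, k ≤ n →
      kMaxSum hC.eigenvalues k ≤ ∫ τ, kMaxSum ((hD τ).eigenvalues) k ∂ν) :
    ∀ k : ℕ, 1 ≤ k → k ≤ n →
      kMaxSum (fun j => f (hC.eigenvalues j)) k ≤
        ∫ τ, kMaxSum (fun j => f ((hD τ).eigenvalues j)) k ∂ν :=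
  kyFan_convex_integral_average_general ν n C hC D hD hint f hf_mono hf_conv hintf hmaj
end
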